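/- If a labeled graph G on [n] is 12-representable by a 121-avoiding word, then G is 12-representable by a permutation of [n]. -/

import Mathlib

/-- Every occurrence of `j` precedes every occurrence of `i` in the word `w`. -/
def EveryBefore (w : List ℕ) (j i : ℕ) : Prop :=
  ∀ p q : Fin w.length, w.get p = j → w.get q = i → p < q

/-- The word `w` 12-represents the graph `G` on the vertex set `{1, …, n}`:
`w` uses only letters from `{1, …, n}`, contains each of them at least once, and
for `i < j` in `{1, …, n}`, `i` and `j` are adjacent iff every `j` occurs before every `i`. -/
def Represents12 (n : ℕ) (G : SimpleGraph ℕ) (w : List ℕ) : Prop :=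
  (∀ x ∈ w, 1 ≤ x ∧ x ≤ n) ∧
  (∀ i, 1 ≤ i → i ≤ n → i ∈ w) ∧
  (∀ i j, 1 ≤ i → i < j → j ≤ n → (G.Adj i j ↔ EveryBefore w j i))

/-- `w` is a permutation of `{1, …, n}`, i.e. each letter occurs exactly once. -/
def IsPermWord (n : ℕ) (w : List ℕ) : Prop :=
  w.Perm (List.range' 1 n)

/-- `w` avoids the pattern 121: no subsequence x, y, x with x < y. -/
def Avoids121 (w : List ℕ) : Prop :=
  ¬ ∃ p q r : Fin w.length, p < q ∧ q < r ∧ w.get p = w.get r ∧ w.get p < w.get q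

/-!
`List.dedup` keeps the last copy of each letter, so it is a permutation of `{1, …, n}` whenever `w`
is a 12-representant. For `i < j`, non-adjacency means that some `i` precedes some `j`, i.e.
`[i, j] <+ w`. Deduplication can only destroy such an occurrence by deleting that `i`, which
requires a later copy of `i`; that would give the forbidden pattern `i j i`.
-/

namespace List

variable {α : Type*}

theorem pair_sublist_or_of_mem {a b : α} {l : List α} (ha : a ∈ l) (hb : b ∈ l) (hab : a ≠ b) :
    [a, b] <+ l ∨ [b, a] <+ l := by
  induction l with
  | nil => simp at ha
  | cons x t ih =>
    rcases mem_cons.1 ha with rfl | ha'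
    · exact .inl <| .cons_cons _ <| singleton_sublist.2 <| (mem_cons.1 hb).resolve_left hab.symm
    rcases mem_cons.1 hb with rfl | hb'
    · exact .inr <| .cons_cons _ <| singleton_sublist.2 ha'
    exact (ih ha' hb').imp (·.cons x) (·.cons x)

variable [DecidableEq α]

theorem dedup_sublist_dedup_cons (x : α) (l : List α) : l.dedup <+ (x :: l).dedup := by
  by_cases hx : x ∈ l
  · rw [dedup_cons_of_mem hx]
  · rw [dedup_cons_of_notMem hx]
    exact sublist_cons_self x _

theorem pair_sublist_dedup_iff {a b : α} {l : List α} (hab : a ≠ b) (h : ¬ [a, b, a] <+ l) :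
    [a, b] <+ l.dedup ↔ [a, b] <+ l := by
  refine ⟨(·.trans (dedup_sublist l)), fun hl => ?_⟩
  induction l with
  | nil => simp at hl
  | cons x t ih =>
    have ih' : [a, b] <+ t → [a, b] <+ (x :: t).dedup :=
      fun ht => (ih (fun h' => h (h'.cons x)) ht).trans (dedup_sublist_dedup_cons x t)
    rcases sublist_cons_iff.1 hl with ht | ⟨r, hr, hrt⟩
    · exact ih' ht
    obtain ⟨rfl, rfl⟩ := cons_eq_cons.1 hr
    have hb : b ∈ t := singleton_sublist.1 hrt
    by_cases ha : a ∈ t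
    · exact ih' ((pair_sublist_or_of_mem ha hb hab).resolve_right fun hba => h (hba.cons_cons a))
    · rw [dedup_cons_of_notMem ha]
      exact (singleton_sublist.2 (mem_dedup.2 hb)).cons_cons a

end List

open List

theorem everyBefore_iff_not_pair_sublist {w : List ℕ} {i j : ℕ} (hij : i ≠ j) :
    EveryBefore w j i ↔ ¬ [i, j] <+ w := by
  have hpairwise : EveryBefore w j i ↔ w.Pairwise (fun x y => ¬ (x = i ∧ y = j)) := by
    rw [pairwise_iff_getElem]
    constructor
    · rintro h p q hp hq hpq ⟨hpi, hqj⟩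
      exact (h ⟨q, hq⟩ ⟨p, hp⟩ hqj hpi).not_gt hpq
    · rintro h ⟨p, hp⟩ ⟨q, hq⟩ (hpj : w[p] = j) (hqi : w[q] = i)
      refine Fin.mk_lt_mk.2 (lt_of_not_ge fun hqp => ?_)
      rcases hqp.lt_or_eq with hqp | rfl
      · exact h q p hq hp hqp ⟨hqi, hpj⟩
      · exact hij (hqi.symm.trans hpj)
  rw [hpairwise, pairwise_iff_forall_sublist]
  exact ⟨fun h hs => h hs ⟨rfl, rfl⟩, fun h a b hs ⟨hai, hbj⟩ => h (hai ▸ hbj ▸ hs)⟩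

theorem Avoids121.not_sublist {w : List ℕ} (hw : Avoids121 w) {x y : ℕ} (hxy : x < y) :
    ¬ [x, y, x] <+ w := by
  rw [sublist_iff_exists_fin_orderEmbedding_get_eq]
  rintro ⟨f, hf⟩
  exact hw ⟨f 0, f 1, f 2, f.strictMono (Fin.lt_def.2 (by simp)),
    f.strictMono (Fin.lt_def.2 (by simp)), (hf 0).symm.trans (hf 2), (hf 0) ▸ (hf 1) ▸ hxy⟩

namespace Represents12

variable {n : ℕ} {G : SimpleGraph ℕ} {w : List ℕ}

theorem isPermWord_of_nodup (h : Represents12 n G w) (hw : w.Nodup) : IsPermWord n w := by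
  rw [IsPermWord, perm_ext_iff_of_nodup hw nodup_range']
  intro x
  rw [mem_range'_1]
  exact ⟨fun hx => by have := h.1 x hx; omega, fun hx => h.2.1 x hx.1 (by omega)⟩

theorem dedup (h : Represents12 n G w) (hw : Avoids121 w) : Represents12 n G w.dedup := by
  obtain ⟨hrange, hmem, hadj⟩ := h
  refine ⟨fun x hx => hrange x (mem_dedup.1 hx), fun i hi hin => mem_dedup.2 (hmem i hi hin),
    fun i j hi hij hjn => ?_⟩
  rw [hadj i j hi hij hjn, everyBefore_iff_not_pair_sublist hij.ne,
    everyBefore_iff_not_pair_sublist hij.ne, pair_sublist_dedup_iff hij.ne (hw.not_sublist hij)]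

end Represents12

theorem stmt_4 (n : ℕ) (G : SimpleGraph ℕ)
    (h : ∃ w, Avoids121 w ∧ Represents12 n G w) :
    ∃ π, IsPermWord n π ∧ Represents12 n G π := by
  obtain ⟨w, hw, hrep⟩ := h
  exact ⟨w.dedup, (hrep.dedup hw).isPermWord_of_nodup (nodup_dedup w), hrep.dedup hw⟩
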